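/- Let X and Y be J-posets. Then X and Y are isomorphic as posets if and only if Str X and Str Y are isomorphic as posets. Specifically: if ρ: X → Y is an isomorphism, then the map φ: Str X → Str Y given by φ(A,B) = (ρ(A), ρ(B)) for all (A,B) ∈ Str X is an isomorphism; and conversely, if φ: Str X → Str Y is any isomorphism, then there exists an isomorphism ρ: X → Y such that φ(A,B) = (ρ(A), ρ(B)) for all (A,B) ∈ Str X. -/

import Mathlib

/-!
The forward direction is transport of structure. Conversely, let `φ` be an isomorphism of
`Str X` onto `Str Y`. Two elements of `Str` have a common upper bound iff their second
coordinates meet, and the second coordinate is a singleton iff any two elements above have a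
common upper bound; so `φ` carries second coordinates `{m}` to second coordinates `{ρ m}`.
By (J3) every element lies below one with second coordinate `{m}` whose new points avoid any
prescribed finite set. This forces `φ` to respect inclusion of first coordinates whenever the
second coordinates meet; hence `φ` carries first coordinates `{a}` to `{ρ a}`, and on the
elements with second coordinate `{m}` it acts on first coordinates as an isomorphism that
preserves unions. A point `u` not below `m` is reached through a point below both `m` and some
`μ > u`, which exists by (J2) and (J4).
-/

open Order Set

/-- The minimal upper bound set of `A`: the minimal elements of the set of upper bounds. -/
def mub (X : Type*) [PartialOrder X] (A : Set X) : Set X :=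
  {x ∈ upperBounds A | ∀ y ∈ upperBounds A, ¬ y < x}

/-- The set of elements of height `i` in `X`. -/
def level (X : Type*) [PartialOrder X] (i : ℕ) : Set X :=
  {x : X | Order.height x = (i : ℕ∞)}

/-- A J-poset: a countable poset with a unique minimal element satisfying (J1)-(J4). -/
structure IsJPoset (X : Type*) [PartialOrder X] : Prop where
  countable : Countable X
  uniqueMin : ∃! x : X, IsMin x
  dim2 : Order.krullDim X = 2
  mubFinite : ∀ A : Set X, A.Nonempty → (mub X A).Finite
  j2 : ∀ x ∈ level X 1, {z : X | x < z}.Infinite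
  j3 : ∀ m ∈ level X 2, ∀ F : Set X, F ⊆ level X 1 → F.Finite →
        ∃ K : Set X, K ⊆ level X 1 ∧ K.Finite ∧ Disjoint K F ∧ mub X K = {m}
  j4 : ∀ T : Set X, T ⊆ level X 2 → T.Finite → T.Nonempty →
        ∃ t ∈ level X 1, ∀ m ∈ T, t < m

/-- `(A, B)` is a member of `Str X`. -/
def StrMem (X : Type*) [PartialOrder X] (A B : Set X) : Prop :=
  A ⊆ level X 1 ∧ B ⊆ level X 2 ∧
  ((A.Finite ∧ A.Nonempty ∧ B.Finite ∧ B.Nonempty) ∨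
    (∃ x, x ∈ level X 1 ∧ A = {x} ∧ B = {z ∈ level X 2 | x < z})) ∧
  (∃ a ∈ A, ∀ b ∈ B, a < b)

/-- `(C, D)` dominates `(A, B)` via `W`. -/
def Dominates (X : Type*) [PartialOrder X] (C D A B W : Set X) : Prop :=
  A ⊂ C ∧ D ⊆ B ∧ W ⊆ C ∧ W.Nonempty ∧
  (∀ w ∈ W, ∀ d ∈ D, w < d) ∧
  (∀ a ∈ A, ∀ m : X, a < m → (∀ w ∈ W, w < m) → m ∈ D)

/-- The order on `Str X`: `(A,B) ≤ (C,D)`. -/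
def StrLE (X : Type*) [PartialOrder X] (A B C D : Set X) : Prop :=
  (A = C ∧ B = D) ∨ ∃ W : Set X, Dominates X C D A B W

/-- The strict order on `Str X`: `(A,B) < (C,D)`. -/
def StrLT (X : Type*) [PartialOrder X] (A B C D : Set X) : Prop :=
  StrLE X A B C D ∧ ¬(A = C ∧ B = D)

/-- `ℓ(A,B)`: the number of `a ∈ A` with `a < b` for all `b ∈ B`. -/
noncomputable def ell (X : Type*) [PartialOrder X] (A B : Set X) : ℕ :=
  {a ∈ A | ∀ b ∈ B, a < b}.ncard

/-- `η(A,B) = |A| - ℓ(A,B)`. -/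
noncomputable def eta (X : Type*) [PartialOrder X] (A B : Set X) : ℕ :=
  A.ncard - ell X A B

/-- `Str X` as a type of pairs. -/
abbrev Str (X : Type*) [PartialOrder X] := {p : Set X × Set X // StrMem X p.1 p.2}

def strLE {X : Type*} [PartialOrder X] (p q : Str X) : Prop :=
  StrLE X p.1.1 p.1.2 q.1.1 q.1.2

def strLT {X : Type*} [PartialOrder X] (p q : Str X) : Prop :=
  strLE p q ∧ p ≠ q

/-- Membership in `Str_F X`: members of `Str X` with both coordinates finite. -/
def StrFMem (X : Type*) [PartialOrder X] (A B : Set X) : Prop :=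
  StrMem X A B ∧ A.Finite ∧ B.Finite

/-- `Str_F X` as a type of pairs. -/
abbrev StrF (X : Type*) [PartialOrder X] := {p : Set X × Set X // StrFMem X p.1 p.2}

def strFLE {X : Type*} [PartialOrder X] (p q : StrF X) : Prop :=
  StrLE X p.1.1 p.1.2 q.1.1 q.1.2

/-- `K_{Str_F X}(z)`: all `(K, {b}) ∈ Str_F X` with `z ∈ K` and `mub K = {b}`. -/
def KSet (X : Type*) [PartialOrder X] (z : X) : Set (StrF X) :=
  {p | z ∈ p.1.1 ∧ ∃ b : X, p.1.2 = {b} ∧ mub X p.1.1 = {b}}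

/-- The three-element poset `𝕀₂`: two incomparable minimal elements below one top element,
realized as the nonempty subsets of a two-element set ordered by inclusion. -/
abbrev I2 := {s : Set (Fin 2) // s.Nonempty}

section Levels

variable {X Y : Type*} [PartialOrder X] [PartialOrder Y]

lemma notMem_level_of_mem_level {x : X} {i j : ℕ} (hx : x ∈ level X i) (h : i ≠ j) :
    x ∉ level X j :=
  fun hj => h (by exact_mod_cast hx.symm.trans hj)

lemma isMin_iff_mem_level_zero {x : X} : IsMin x ↔ x ∈ level X 0 := by
  simp [level, Order.height_eq_zero]

lemma lt_height_of_mem_level {x y : X} {i : ℕ} (hx : x ∈ level X i) (h : x < y) :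
    (i : ℕ∞) < height y := by
  have hx' : height x = i := hx
  have := Order.height_strictMono h (hx' ▸ ENat.natCast_lt_top i)
  rwa [hx'] at this

lemma OrderIso.apply_mem_level (e : X ≃o Y) {x : X} {i : ℕ} :
    e x ∈ level Y i ↔ x ∈ level X i := by
  simp only [level, Set.mem_ofPred_eq, Order.height_orderIso]

end Levels

namespace IsJPoset

variable {X : Type*} [PartialOrder X]

lemma height_le_two (hX : IsJPoset X) (x : X) : height x ≤ 2 := by
  have h := Order.height_le_krullDim x
  rw [hX.dim2] at h
  exact WithBot.coe_le_coe.1 h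

lemma isMin_or_mem_level (hX : IsJPoset X) (x : X) :
    IsMin x ∨ x ∈ level X 1 ∨ x ∈ level X 2 := by
  obtain ⟨n, hn⟩ : ∃ n : ℕ, height x = n :=
    ENat.ne_top_iff_exists.1 (ne_top_of_le_ne_top (by decide) (hX.height_le_two x)) |>.imp
      fun _ h => h.symm
  have : n ≤ 2 := by exact_mod_cast hn ▸ hX.height_le_two x
  rw [← Order.height_eq_zero]
  interval_cases n <;> simp [level, hn]

lemma mem_level_two_of_lt (hX : IsJPoset X) {x z : X} (hx : x ∈ level X 1) (h : x < z) :
    z ∈ level X 2 :=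
  le_antisymm (hX.height_le_two z) (Order.add_one_le_of_lt (lt_height_of_mem_level hx h))

lemma not_lt_of_mem_level_two (hX : IsJPoset X) {m z : X} (hm : m ∈ level X 2) : ¬ m < z :=
  fun h => (lt_height_of_mem_level hm h).not_ge (hX.height_le_two z)

lemma isMin_or_mem_level_of_lt (hX : IsJPoset X) {x y : X} (h : x < y) :
    IsMin x ∨ x ∈ level X 1 ∧ y ∈ level X 2 := by
  rcases hX.isMin_or_mem_level x with hx | hx | hx
  · exact Or.inl hx
  · exact Or.inr ⟨hx, hX.mem_level_two_of_lt hx h⟩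
  · exact absurd h (hX.not_lt_of_mem_level_two hx)

lemma isMin_le (hX : IsJPoset X) {r : X} (hr : IsMin r) (x : X) : r ≤ x := by
  obtain ⟨w, hw, hwx⟩ : ∃ w, IsMin w ∧ w ≤ x := by
    by_cases hx : IsMin x
    · exact ⟨x, hx, le_rfl⟩
    · have hfin : height x < ⊤ := (hX.height_le_two x).trans_lt (by decide)
      obtain ⟨w, hwx, hw⟩ := (Order.coe_lt_height_iff hfin (n := 0)).1
        (pos_iff_ne_zero.2 (Order.height_eq_zero.not.2 hx))
      exact ⟨w, Order.height_eq_zero.1 hw, hwx.le⟩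
  obtain ⟨_, -, hmin⟩ := hX.uniqueMin
  rwa [hmin r hr, ← hmin w hw]

lemma exists_gt (hX : IsJPoset X) {x : X} (hx : x ∈ level X 1) : ∃ m ∈ level X 2, x < m :=
  (hX.j2 x hx).nonempty.imp fun _ h => ⟨hX.mem_level_two_of_lt hx h, h⟩

lemma exists_lt_lt (hX : IsJPoset X) {m μ : X} (hm : m ∈ level X 2) (hμ : μ ∈ level X 2) :
    ∃ t ∈ level X 1, t < m ∧ t < μ := by
  obtain ⟨t, ht, hlt⟩ := hX.j4 {m, μ} (by simp [insert_subset_iff, hm, hμ]) (by simp)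
    (insert_nonempty m {μ})
  exact ⟨t, ht, hlt m (by simp), hlt μ (by simp)⟩

lemma exists_upperBounds_eq (hX : IsJPoset X) {m : X} (hm : m ∈ level X 2) {G : Set X}
    (hG : G.Finite) :
    ∃ K ⊆ level X 1, K.Finite ∧ K.Nonempty ∧ Disjoint K G ∧ upperBounds K = {m} := by
  obtain ⟨K, hK, hKf, hKG, hKm⟩ :=
    hX.j3 m hm (G ∩ level X 1) inter_subset_right (hG.inter_of_left _)
  have hmK : m ∈ mub X K := hKm ▸ rfl
  have hlt_m {v : X} (hv : v ∉ level X 2) (hvm : v ≤ m) : v < m :=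
    hvm.lt_of_ne fun h => hv (h ▸ hm)
  have hKne : K.Nonempty := by
    rw [nonempty_iff_ne_empty]
    rintro rfl
    obtain ⟨r, hr, -⟩ := hX.uniqueMin
    exact hmK.2 r (by simp) (hlt_m (notMem_level_of_mem_level (isMin_iff_mem_level_zero.1 hr)
      (by decide)) (hX.isMin_le hr m))
  obtain ⟨k, hk⟩ := hKne
  have hub : ∀ v ∈ upperBounds K, v ∈ level X 2 := by
    intro v hv
    refine hX.mem_level_two_of_lt (hK hk) ((hv hk).lt_of_ne fun h => ?_)
    subst h
    exact hmK.2 k hv (hlt_m (notMem_level_of_mem_level (hK hk) (by decide)) (hmK.1 hk))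
  refine ⟨K, hK, hKf, ⟨k, hk⟩,
    Set.disjoint_left.2 fun x hx hxG => Set.disjoint_left.1 hKG hx ⟨hxG, hK hx⟩, ?_⟩
  exact Subset.antisymm
    (fun y hy => hKm ▸ ⟨hy, fun v hv => hX.not_lt_of_mem_level_two (hub v hv)⟩)
    (singleton_subset_iff.2 hmK.1)

end IsJPoset

section StrMem

variable {X Y : Type*} [PartialOrder X] [PartialOrder Y]

lemma strMem_of_finite {A B : Set X} (hA : A ⊆ level X 1) (hB : B ⊆ level X 2) (hAf : A.Finite)
    (hBf : B.Finite) (hBne : B.Nonempty) {a : X} (ha : a ∈ A) (haB : ∀ b ∈ B, a < b) :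
    StrMem X A B :=
  ⟨hA, hB, Or.inl ⟨hAf, ⟨a, ha⟩, hBf, hBne⟩, a, ha, haB⟩

lemma strMem_singleton {A : Set X} {m a : X} (hA : A ⊆ level X 1) (hAf : A.Finite)
    (hm : m ∈ level X 2) (ha : a ∈ A) (ham : a < m) : StrMem X A {m} :=
  strMem_of_finite hA (singleton_subset_iff.2 hm) hAf (finite_singleton m) (singleton_nonempty m)
    ha fun _ hb => hb ▸ ham

lemma StrMem.image (e : X ≃o Y) {A B : Set X} (h : StrMem X A B) :
    StrMem Y (e '' A) (e '' B) := by
  obtain ⟨hA, hB, hform, a, ha, haB⟩ := h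
  refine ⟨?_, ?_, ?_, e a, mem_image_of_mem e ha, ?_⟩
  · rintro _ ⟨x, hx, rfl⟩
    exact e.apply_mem_level.2 (hA hx)
  · rintro _ ⟨x, hx, rfl⟩
    exact e.apply_mem_level.2 (hB hx)
  · rcases hform with ⟨hAf, hAne, hBf, hBne⟩ | ⟨x, hx, rfl, rfl⟩
    · exact Or.inl ⟨hAf.image e, hAne.image e, hBf.image e, hBne.image e⟩
    · refine Or.inr ⟨e x, e.apply_mem_level.2 hx, image_singleton, ?_⟩
      ext z
      obtain ⟨z, rfl⟩ := e.surjective z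
      simp [e.apply_mem_level]
  · rintro _ ⟨b, hb, rfl⟩
    exact e.strictMono (haB b hb)

lemma StrLE.image (e : X ≃o Y) {A B C D : Set X} (h : StrLE X A B C D) :
    StrLE Y (e '' A) (e '' B) (e '' C) (e '' D) := by
  rcases h with ⟨rfl, rfl⟩ | ⟨W, hAC, hDB, hWC, hWne, hWD, hmax⟩
  · exact Or.inl ⟨rfl, rfl⟩
  refine Or.inr ⟨e '' W, e.injective.image_strictMono hAC, image_mono hDB, image_mono hWC,
    hWne.image e, ?_, ?_⟩
  · rintro _ ⟨w, hw, rfl⟩ _ ⟨d, hd, rfl⟩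
    exact e.strictMono (hWD w hw d hd)
  · rintro _ ⟨a, ha, rfl⟩ m ham hWm
    obtain ⟨m, rfl⟩ := e.surjective m
    refine mem_image_of_mem e (hmax a ha m (e.lt_iff_lt.1 ham) fun w hw => ?_)
    exact e.lt_iff_lt.1 (hWm (e w) (mem_image_of_mem e hw))

lemma Dominates.mono {A A' B B' C D W : Set X} (h : Dominates X C D A' B' W) (hA : A ⊆ A')
    (hD : D ⊆ B) : Dominates X C D A B W :=
  ⟨hA.trans_ssubset h.1, hD, h.2.2.1, h.2.2.2.1, h.2.2.2.2.1,
    fun a ha => h.2.2.2.2.2 a (hA ha)⟩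

end StrMem

namespace Str

variable {X : Type*} [PartialOrder X]

lemma A_subset (p : Str X) : p.1.1 ⊆ level X 1 := p.2.1

lemma B_subset (p : Str X) : p.1.2 ⊆ level X 2 := p.2.2.1

lemma exists_lt_B (p : Str X) : ∃ a ∈ p.1.1, ∀ b ∈ p.1.2, a < b := p.2.2.2.2

lemma A_finite (p : Str X) : p.1.1.Finite := by
  rcases p.2.2.2.1 with h | ⟨x, -, hA, -⟩
  · exact h.1
  · exact hA ▸ finite_singleton x

lemma A_nonempty (p : Str X) : p.1.1.Nonempty :=
  p.exists_lt_B.imp fun _ h => h.1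

lemma B_nonempty (hX : IsJPoset X) (p : Str X) : p.1.2.Nonempty := by
  rcases p.2.2.2.1 with h | ⟨x, hx, -, hB⟩
  · exact h.2.2.2
  · obtain ⟨m, hm, hxm⟩ := hX.exists_gt hx
    exact ⟨m, hB ▸ ⟨hm, hxm⟩⟩

lemma lt_of_eq_singleton {p : Str X} {a m : X} (hA : p.1.1 = {a}) (hB : p.1.2 = {m}) :
    a < m := by
  obtain ⟨a', ha', hlt⟩ := p.exists_lt_B
  rw [hA, mem_singleton_iff] at ha'
  exact ha' ▸ hlt m (hB ▸ rfl)

def up {x : X} (hx : x ∈ level X 1) : Str X :=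
  ⟨({x}, {z ∈ level X 2 | x < z}),
    singleton_subset_iff.2 hx, sep_subset _ _, Or.inr ⟨x, hx, rfl, rfl⟩, x, rfl, fun _ hz => hz.2⟩

lemma exists_B_eq_singleton (hX : IsJPoset X) {m : X} (hm : m ∈ level X 2) :
    ∃ q : Str X, q.1.2 = {m} := by
  obtain ⟨a, ha, ham, -⟩ := hX.exists_lt_lt hm hm
  exact ⟨⟨({a}, {m}),
    strMem_singleton (singleton_subset_iff.2 ha) (finite_singleton a) hm rfl ham⟩, rfl⟩

end Str

section StrOrder

variable {X : Type*} [PartialOrder X]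

lemma strLE.fst_subset {p q : Str X} (h : strLE p q) : p.1.1 ⊆ q.1.1 := by
  rcases h with ⟨h, -⟩ | ⟨W, hW⟩
  · exact h.subset
  · exact hW.1.subset

lemma strLE.snd_subset {p q : Str X} (h : strLE p q) : q.1.2 ⊆ p.1.2 := by
  rcases h with ⟨-, h⟩ | ⟨W, hW⟩
  · exact h.symm.subset
  · exact hW.2.1

lemma strLT_iff_dominates {p q : Str X} :
    strLT p q ↔ ∃ W, Dominates X q.1.1 q.1.2 p.1.1 p.1.2 W := by
  refine ⟨fun ⟨hle, hne⟩ => ?_, fun ⟨W, hW⟩ => ⟨Or.inr ⟨W, hW⟩, ?_⟩⟩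
  · exact hle.resolve_left fun ⟨hA, hB⟩ => hne (Subtype.ext (Prod.ext hA hB))
  · rintro rfl
    exact hW.1.ne rfl

instance : Std.Refl (strLE : Str X → Str X → Prop) := ⟨fun _ => Or.inl ⟨rfl, rfl⟩⟩

instance : Std.Antisymm (strLE : Str X → Str X → Prop) :=
  ⟨fun p q hpq hqp => by
    rcases hpq with ⟨hA, hB⟩ | ⟨W, hW⟩
    · exact Subtype.ext (Prod.ext hA hB)
    · exact absurd (hW.1.trans_subset hqp.fst_subset) (lt_irrefl _)⟩

/-- The witness is `(S ∪ K, {m})`, with `K` from `IsJPoset.exists_upperBounds_eq`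
avoiding `G ∪ S`. -/
lemma Str.exists_strLT_of_subset (hX : IsJPoset X) {m : X} (hm : m ∈ level X 2) {S G : Set X}
    (hS : S ⊆ level X 1) (hSf : S.Finite) (hG : G.Finite) :
    ∃ r : Str X, r.1.2 = {m} ∧ Disjoint (r.1.1 \ S) G ∧
      ∀ p : Str X, p.1.1 ⊆ S → m ∈ p.1.2 → strLT p r := by
  obtain ⟨K, hK, hKf, ⟨k, hk⟩, hKG, hKm⟩ := hX.exists_upperBounds_eq hm (hG.union hSf)
  have hKlt : ∀ w ∈ K, w < m := fun w hw =>
    (hKm.symm ▸ rfl : m ∈ upperBounds K) hw |>.lt_of_ne fun h =>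
      notMem_level_of_mem_level (hK hw) (by decide) (h ▸ hm)
  refine ⟨⟨(S ∪ K, {m}), strMem_singleton (union_subset hS hK) (hSf.union hKf) hm
    (Or.inr hk) (hKlt k hk)⟩, rfl, ?_, fun p hpS hmp => strLT_iff_dominates.2 ⟨K, ?_⟩⟩
  · rw [union_sdiff_left]
    exact (hKG.mono_right subset_union_left).mono_left sdiff_subset
  · have hkp : k ∉ p.1.1 := fun h => Set.disjoint_left.1 hKG hk (Or.inr (hpS h))
    refine ⟨(ssubset_iff_of_subset (hpS.trans subset_union_left)).2 ⟨k, Or.inr hk, hkp⟩,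
      singleton_subset_iff.2 hmp, subset_union_right, ⟨k, hk⟩, fun w hw _ hd => hd ▸ hKlt w hw,
      fun _ _ μ _ hμ => ?_⟩
    change μ ∈ ({m} : Set X)
    rw [← hKm]
    exact fun w hw => (hμ w hw).le

lemma Str.exists_strLT (hX : IsJPoset X) (p : Str X) {m : X} (hm : m ∈ p.1.2) {G : Set X}
    (hG : G.Finite) : ∃ r : Str X, r.1.2 = {m} ∧ strLT p r ∧ Disjoint (r.1.1 \ p.1.1) G := by
  obtain ⟨r, hrB, hrG, hr⟩ :=
    Str.exists_strLT_of_subset hX (p.B_subset hm) p.A_subset p.A_finite hG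
  exact ⟨r, hrB, hr p subset_rfl hm, hrG⟩

def Str.Compatible (p q : Str X) : Prop := ∃ s, strLE p s ∧ strLE q s

lemma Str.Compatible.symm {p q : Str X} (h : Str.Compatible p q) : Str.Compatible q p :=
  h.imp fun _ h => h.symm

lemma Str.compatible_iff (hX : IsJPoset X) {p q : Str X} :
    Str.Compatible p q ↔ (p.1.2 ∩ q.1.2).Nonempty := by
  constructor
  · rintro ⟨s, hps, hqs⟩
    exact (s.B_nonempty hX).mono (subset_inter hps.snd_subset hqs.snd_subset)
  · rintro ⟨m, hmp, hmq⟩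
    obtain ⟨r, -, -, hr⟩ := Str.exists_strLT_of_subset hX (p.B_subset hmp)
      (union_subset p.A_subset q.A_subset) (p.A_finite.union q.A_finite) finite_empty
    exact ⟨r, (hr p subset_union_left hmp).1, (hr q subset_union_right hmq).1⟩

/-- This is what lets an isomorphism of `Str` act on the points of level two. -/
lemma Str.exists_B_eq_singleton_iff (hX : IsJPoset X) (q : Str X) :
    (∃ m, q.1.2 = {m}) ↔ ∀ r₁ r₂, strLE q r₁ → strLE q r₂ → Str.Compatible r₁ r₂ := by
  constructor
  · rintro ⟨m, hm⟩ r₁ r₂ h₁ h₂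
    have hmem {r : Str X} (h : strLE q r) : m ∈ r.1.2 := by
      obtain ⟨b, hb⟩ := r.B_nonempty hX
      have hbm : b ∈ ({m} : Set X) := hm ▸ h.snd_subset hb
      exact hbm ▸ hb
    exact (Str.compatible_iff hX).2 ⟨m, hmem h₁, hmem h₂⟩
  · intro H
    obtain ⟨m, hm⟩ := q.B_nonempty hX
    refine ⟨m, eq_singleton_iff_unique_mem.2 ⟨hm, fun m' hm' => ?_⟩⟩
    obtain ⟨r, hrB, hr, -⟩ := q.exists_strLT hX hm finite_empty
    obtain ⟨r', hrB', hr', -⟩ := q.exists_strLT hX hm' finite_empty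
    obtain ⟨b, hb, hb'⟩ := (Str.compatible_iff hX).1 (H r' r hr'.1 hr.1)
    rw [hrB', mem_singleton_iff] at hb
    rw [hrB, mem_singleton_iff] at hb'
    exact hb.symm.trans hb'

end StrOrder

abbrev StrIso (X Y : Type*) [PartialOrder X] [PartialOrder Y] :=
  (strLE : Str X → Str X → Prop) ≃r (strLE : Str Y → Str Y → Prop)

namespace StrIso

variable {X Y : Type*} [PartialOrder X] [PartialOrder Y]

def ofOrderIso (e : X ≃o Y) : StrIso X Y where
  toFun p := ⟨(e '' p.1.1, e '' p.1.2), p.2.image e⟩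
  invFun q := ⟨(e.symm '' q.1.1, e.symm '' q.1.2), q.2.image e.symm⟩
  left_inv p := by simp only [OrderIso.symm_image_image]
  right_inv q := by simp only [OrderIso.image_symm_image]
  map_rel_iff' {p q} := by
    refine ⟨fun h => ?_, StrLE.image e⟩
    change StrLE Y (e '' p.1.1) (e '' p.1.2) (e '' q.1.1) (e '' q.1.2) at h
    simpa only [strLE, OrderIso.symm_image_image] using StrLE.image e.symm h

variable (φ : StrIso X Y)

lemma strLT_iff {p q : Str X} : strLT (φ p) (φ q) ↔ strLT p q :=
  and_congr φ.map_rel_iff φ.injective.ne_iff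

lemma compatible_iff {p q : Str X} : Str.Compatible (φ p) (φ q) ↔ Str.Compatible p q := by
  simp only [Str.Compatible, φ.surjective.exists, φ.map_rel_iff]

lemma exists_B_eq_singleton (hX : IsJPoset X) (hY : IsJPoset Y) {q : Str X} {m : X}
    (hq : q.1.2 = {m}) : ∃ n, (φ q).1.2 = {n} := by
  rw [Str.exists_B_eq_singleton_iff hY, φ.surjective.forall₂]
  intro r₁ r₂ h₁ h₂
  rw [φ.map_rel_iff] at h₁ h₂
  exact φ.compatible_iff.2 ((Str.exists_B_eq_singleton_iff hX q).1 ⟨m, hq⟩ r₁ r₂ h₁ h₂)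

lemma B_eq_of_B_eq_singleton (hX : IsJPoset X) (hY : IsJPoset Y) {q q' : Str X} {m : X}
    (hq : q.1.2 = {m}) (hq' : q'.1.2 = {m}) : (φ q).1.2 = (φ q').1.2 := by
  obtain ⟨n, hn⟩ := φ.exists_B_eq_singleton hX hY hq
  obtain ⟨n', hn'⟩ := φ.exists_B_eq_singleton hX hY hq'
  have hc : Str.Compatible q q' := (Str.compatible_iff hX).2 ⟨m, by simp [hq, hq']⟩
  obtain ⟨y, hy, hy'⟩ := (Str.compatible_iff hY).1 (φ.compatible_iff.2 hc)
  rw [hn, mem_singleton_iff] at hy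
  rw [hn', mem_singleton_iff] at hy'
  rw [hn, hn', ← hy, hy']

lemma exists_mem_B_symm_B_eq (hX : IsJPoset X) (hY : IsJPoset Y) {q : Str X} {m : X}
    (hm : m ∈ q.1.2) : ∃ n ∈ (φ q).1.2, ∀ r : Str Y, r.1.2 = {n} → (φ.symm r).1.2 = {m} := by
  obtain ⟨r₀, hr₀B, hr₀, -⟩ := q.exists_strLT hX hm finite_empty
  obtain ⟨n, hn⟩ := φ.exists_B_eq_singleton hX hY hr₀B
  refine ⟨n, (φ.map_rel_iff.2 hr₀.1).snd_subset (hn ▸ rfl), fun r hr => ?_⟩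
  rw [StrIso.B_eq_of_B_eq_singleton φ.symm hY hX hr hn, φ.symm_apply_apply, hr₀B]

lemma A_subset_of_compatible (hX : IsJPoset X) (hY : IsJPoset Y) {q q' : Str X}
    (hc : Str.Compatible q q') (hA : q.1.1 ⊆ q'.1.1) : (φ q).1.1 ⊆ (φ q').1.1 := by
  obtain ⟨m, hm, hm'⟩ := (Str.compatible_iff hX).1 hc
  obtain ⟨n, hn, hnm⟩ := φ.exists_mem_B_symm_B_eq hX hY hm'
  intro y hy
  by_contra hy'
  -- Extend `φ q'` to `r` avoiding `y`; pulled back, `r` lies above `q` too, so `y ∈ r`.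
  obtain ⟨r, hrB, hr, hrG⟩ := (φ q').exists_strLT hY hn (finite_singleton y)
  have hq'r : strLT q' (φ.symm r) := by rwa [← φ.strLT_iff, φ.apply_symm_apply]
  obtain ⟨W, hW⟩ := strLT_iff_dominates.1 hq'r
  have hqr : strLT q (φ.symm r) :=
    strLT_iff_dominates.2 ⟨W, hW.mono hA (by rw [hnm r hrB]; exact singleton_subset_iff.2 hm)⟩
  have hyr : y ∈ r.1.1 := by
    simpa using (φ.strLT_iff.2 hqr).1.fst_subset hy
  exact Set.disjoint_left.1 hrG ⟨hyr, hy'⟩ rfl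

lemma A_eq_of_compatible (hX : IsJPoset X) (hY : IsJPoset Y) {q q' : Str X}
    (hc : Str.Compatible q q') (hA : q.1.1 = q'.1.1) : (φ q).1.1 = (φ q').1.1 :=
  (φ.A_subset_of_compatible hX hY hc hA.subset).antisymm
    (φ.A_subset_of_compatible hX hY hc.symm hA.symm.subset)

lemma A_subset_iff_of_B_eq (hX : IsJPoset X) (hY : IsJPoset Y) {q q' : Str X} {m : X}
    (hq : q.1.2 = {m}) (hq' : q'.1.2 = {m}) : (φ q).1.1 ⊆ (φ q').1.1 ↔ q.1.1 ⊆ q'.1.1 := by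
  refine ⟨fun h => ?_,
    φ.A_subset_of_compatible hX hY ((Str.compatible_iff hX).2 ⟨m, by simp [hq, hq']⟩)⟩
  obtain ⟨n, hn⟩ := φ.exists_B_eq_singleton hX hY hq
  have hn' : (φ q').1.2 = {n} := (φ.B_eq_of_B_eq_singleton hX hY hq' hq).trans hn
  simpa using StrIso.A_subset_of_compatible φ.symm hY hX
    ((Str.compatible_iff hY).2 ⟨n, by simp [hn, hn']⟩) h

lemma A_subset_union (hX : IsJPoset X) (hY : IsJPoset Y) {q₁ q₂ q₃ : Str X} {m : X}
    (h₁ : q₁.1.2 = {m}) (h₂ : q₂.1.2 = {m}) (h₃ : q₃.1.2 = {m})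
    (hA : q₃.1.1 = q₁.1.1 ∪ q₂.1.1) : (φ q₃).1.1 ⊆ (φ q₁).1.1 ∪ (φ q₂).1.1 := by
  obtain ⟨n, hn⟩ := φ.exists_B_eq_singleton hX hY h₁
  have hn₂ : (φ q₂).1.2 = {n} := (φ.B_eq_of_B_eq_singleton hX hY h₂ h₁).trans hn
  obtain ⟨b, hb, hbn⟩ := (φ q₁).exists_lt_B
  let r : Str Y := ⟨((φ q₁).1.1 ∪ (φ q₂).1.1, {n}),
    strMem_singleton (union_subset (φ q₁).A_subset (φ q₂).A_subset)
      ((φ q₁).A_finite.union (φ q₂).A_finite) ((φ q₁).B_subset (hn ▸ rfl)) (Or.inl hb)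
      (hbn n (hn ▸ rfl))⟩
  have hr : (φ.symm r).1.2 = {m} := by
    rw [StrIso.B_eq_of_B_eq_singleton φ.symm hY hX (q' := φ q₁) rfl hn, φ.symm_apply_apply, h₁]
  have hsub {q : Str X} (hq : q.1.2 = {m}) (hqr : (φ q).1.1 ⊆ r.1.1) : q.1.1 ⊆ (φ.symm r).1.1 :=
    (φ.A_subset_iff_of_B_eq hX hY hq hr).1 (by rwa [φ.apply_symm_apply])
  have := (φ.A_subset_iff_of_B_eq hX hY h₃ hr).2
    (hA ▸ union_subset (hsub h₁ subset_union_left) (hsub h₂ subset_union_right))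
  rwa [φ.apply_symm_apply] at this

lemma exists_A_eq_singleton (hX : IsJPoset X) (hY : IsJPoset Y) {q : Str X} {a : X}
    (hq : q.1.1 = {a}) : ∃ b, (φ q).1.1 = {b} := by
  obtain ⟨b, hb, hbB⟩ := (φ q).exists_lt_B
  obtain ⟨n, hn⟩ := (φ q).B_nonempty hY
  let s : Str Y := ⟨({b}, {n}), strMem_singleton (singleton_subset_iff.2 ((φ q).A_subset hb))
    (finite_singleton b) ((φ q).B_subset hn) rfl (hbB n hn)⟩
  have hs : Str.Compatible s (φ q) := (Str.compatible_iff hY).2 ⟨n, rfl, hn⟩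
  have hsa : (φ.symm s).1.1 = {a} := by
    have := StrIso.A_subset_of_compatible φ.symm hY hX hs (singleton_subset_iff.2 hb)
    rw [φ.symm_apply_apply, hq] at this
    exact (subset_singleton_iff_eq.1 this).resolve_left (φ.symm s).A_nonempty.ne_empty
  have hc : Str.Compatible q (φ.symm s) := by
    simpa using ((StrIso.compatible_iff φ.symm).2 hs).symm
  refine ⟨b, ?_⟩
  rw [φ.A_eq_of_compatible hX hY hc (hq.trans hsa.symm), φ.apply_symm_apply]

structure Induces (ρ : X → Y) : Prop where
  A_eq : ∀ (q : Str X) (a : X), q.1.1 = {a} → (φ q).1.1 = {ρ a}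
  B_eq : ∀ (q : Str X) (m : X), q.1.2 = {m} → (φ q).1.2 = {ρ m}
  isMin : ∀ x, IsMin x → IsMin (ρ x)

lemma exists_induces (hX : IsJPoset X) (hY : IsJPoset Y) : ∃ ρ : X → Y, φ.Induces ρ := by
  have key : ∀ x : X, ∃ y : Y, (∀ q : Str X, q.1.1 = {x} → (φ q).1.1 = {y}) ∧
      (∀ q : Str X, q.1.2 = {x} → (φ q).1.2 = {y}) ∧ (IsMin x → IsMin y) := by
    intro x
    have notA {q : Str X} {i : ℕ} (hx : x ∈ level X i) (hi : i ≠ 1) : q.1.1 ≠ {x} :=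
      fun hq => notMem_level_of_mem_level hx hi (q.A_subset (hq ▸ rfl))
    have notB {q : Str X} {i : ℕ} (hx : x ∈ level X i) (hi : i ≠ 2) : q.1.2 ≠ {x} :=
      fun hq => notMem_level_of_mem_level hx hi (q.B_subset (hq ▸ rfl))
    have notMin {i : ℕ} (hx : x ∈ level X i) (hi : i ≠ 0) : ¬ IsMin x :=
      fun h => notMem_level_of_mem_level hx hi (isMin_iff_mem_level_zero.1 h)
    rcases hX.isMin_or_mem_level x with hx | hx | hx
    · obtain ⟨y, hy, -⟩ := hY.uniqueMin
      have hx0 := isMin_iff_mem_level_zero.1 hx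
      exact ⟨y, fun q hq => absurd hq (notA hx0 (by decide)),
        fun q hq => absurd hq (notB hx0 (by decide)), fun _ => hy⟩
    · obtain ⟨y, hy⟩ := φ.exists_A_eq_singleton hX hY (q := Str.up hx) rfl
      refine ⟨y, fun q hq => ?_, fun q hq => absurd hq (notB hx (by decide)),
        fun h => absurd h (notMin hx (by decide))⟩
      -- `Str.up hx` is compatible with every `q` whose first coordinate is `{x}`.
      rw [← hy]
      refine φ.A_eq_of_compatible hX hY ((Str.compatible_iff hX).2 ?_) hq
      obtain ⟨m, hm⟩ := q.B_nonempty hX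
      obtain ⟨a, ha, haB⟩ := q.exists_lt_B
      rw [hq, mem_singleton_iff] at ha
      exact ⟨m, hm, q.B_subset hm, ha ▸ haB m hm⟩
    · obtain ⟨q₀, hq₀⟩ := Str.exists_B_eq_singleton hX hx
      obtain ⟨y, hy⟩ := φ.exists_B_eq_singleton hX hY hq₀
      exact ⟨y, fun q hq => absurd hq (notA hx (by decide)),
        fun q hq => (φ.B_eq_of_B_eq_singleton hX hY hq hq₀).trans hy,
        fun h => absurd h (notMin hx (by decide))⟩
  choose ρ hA hB hmin using key
  exact ⟨ρ, fun q a => hA a q, fun q m => hB m q, hmin⟩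

namespace Induces

variable {φ} {ρ : X → Y} {σ : Y → X}

lemma B_eq_image (hX : IsJPoset X) (hY : IsJPoset Y) (hρ : φ.Induces ρ) (p : Str X) :
    (φ p).1.2 = ρ '' p.1.2 := by
  ext n
  constructor
  · intro hn
    obtain ⟨r, hrB, hr, -⟩ := (φ p).exists_strLT hY hn finite_empty
    have hpr : strLE p (φ.symm r) := by
      rw [← φ.map_rel_iff, φ.apply_symm_apply]
      exact hr.1
    obtain ⟨m, hm⟩ := StrIso.exists_B_eq_singleton φ.symm hY hX hrB
    refine ⟨m, hpr.snd_subset (hm ▸ rfl), ?_⟩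
    have := hρ.B_eq _ m hm
    rw [φ.apply_symm_apply, hrB, singleton_eq_singleton_iff] at this
    exact this.symm
  · rintro ⟨m, hm, rfl⟩
    obtain ⟨r, hrB, hr, -⟩ := p.exists_strLT hX hm finite_empty
    exact (φ.map_rel_iff.2 hr.1).snd_subset (by rw [hρ.B_eq r m hrB]; rfl)

lemma leftInverse (hX : IsJPoset X) (hρ : φ.Induces ρ) (hσ : StrIso.Induces φ.symm σ) :
    Function.LeftInverse σ ρ := by
  intro x
  rcases hX.isMin_or_mem_level x with hx | hx | hx
  · obtain ⟨_, -, hmin⟩ := hX.uniqueMin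
    exact (hmin _ (hσ.isMin _ (hρ.isMin x hx))).trans (hmin x hx).symm
  · have := hσ.A_eq (φ (Str.up hx)) (ρ x) (hρ.A_eq _ x rfl)
    rw [φ.symm_apply_apply] at this
    exact (singleton_eq_singleton_iff.1 this).symm
  · obtain ⟨q, hq⟩ := Str.exists_B_eq_singleton hX hx
    have := hσ.B_eq (φ q) (ρ x) (hρ.B_eq q x hq)
    rw [φ.symm_apply_apply, hq] at this
    exact (singleton_eq_singleton_iff.1 this).symm

lemma monotone (hX : IsJPoset X) (hY : IsJPoset Y) (hρ : φ.Induces ρ) : Monotone ρ := by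
  intro x x' h
  rcases h.eq_or_lt with rfl | hlt
  · rfl
  rcases hX.isMin_or_mem_level_of_lt hlt with hx | ⟨hx, hx'⟩
  · exact hY.isMin_le (hρ.isMin x hx) _
  · let q : Str X := ⟨({x}, {x'}),
      strMem_singleton (singleton_subset_iff.2 hx) (finite_singleton x) hx' rfl hlt⟩
    exact (Str.lt_of_eq_singleton (hρ.A_eq q x rfl) (hρ.B_eq q x' rfl)).le

lemma mem_A_of_lt (hX : IsJPoset X) (hY : IsJPoset Y) (hρ : φ.Induces ρ) {q : Str X} {m u : X}
    (hq : q.1.2 = {m}) (hu : u ∈ q.1.1) (hum : u < m) : ρ u ∈ (φ q).1.1 := by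
  let s : Str X := ⟨({u}, {m}), strMem_singleton (singleton_subset_iff.2 (q.A_subset hu))
    (finite_singleton u) (q.B_subset (hq ▸ rfl)) rfl hum⟩
  have := (φ.A_subset_iff_of_B_eq hX hY (q := s) rfl hq).2 (singleton_subset_iff.2 hu)
  rwa [hρ.A_eq s u rfl, singleton_subset_iff] at this

/-- For `u` not below `m`, pass through `t < m, μ` with `u < μ`: the first coordinates of
`φ (A ∪ {t}, {m})` and `φ (A ∪ {t}, {μ})` agree, and the first one is covered by
`φ (A, {m})` together with `ρ t`. -/
lemma mem_A (hX : IsJPoset X) (hY : IsJPoset Y) (hρ : φ.Induces ρ) (hσ : StrIso.Induces φ.symm σ)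
    {q : Str X} {m u : X} (hq : q.1.2 = {m}) (hu : u ∈ q.1.1) : ρ u ∈ (φ q).1.1 := by
  by_cases hum : u < m
  · exact hρ.mem_A_of_lt hX hY hq hu hum
  have hm : m ∈ level X 2 := q.B_subset (hq ▸ rfl)
  obtain ⟨μ, hμ, huμ⟩ := hX.exists_gt (q.A_subset hu)
  obtain ⟨t, ht, htm, htμ⟩ := hX.exists_lt_lt hm hμ
  have hS : insert t q.1.1 ⊆ level X 1 := insert_subset ht q.A_subset
  have hSf := q.A_finite.insert t
  let qm : Str X := ⟨(insert t q.1.1, {m}), strMem_singleton hS hSf hm (mem_insert t _) htm⟩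
  let qμ : Str X := ⟨(insert t q.1.1, {μ}), strMem_singleton hS hSf hμ (mem_insert t _) htμ⟩
  let qmμ : Str X := ⟨(insert t q.1.1, {m, μ}),
    strMem_of_finite hS (by simp [insert_subset_iff, hm, hμ]) hSf (by simp) (insert_nonempty _ _)
      (mem_insert t _) (by simp [htm, htμ])⟩
  let st : Str X := ⟨({t}, {m}),
    strMem_singleton (singleton_subset_iff.2 ht) (finite_singleton t) hm rfl htm⟩
  have hqmμ : (φ qm).1.1 = (φ qμ).1.1 := by
    have h₁ : Str.Compatible qm qmμ := (Str.compatible_iff hX).2 ⟨m, rfl, Or.inl rfl⟩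
    have h₂ : Str.Compatible qmμ qμ := (Str.compatible_iff hX).2 ⟨μ, Or.inr rfl, rfl⟩
    exact (φ.A_eq_of_compatible hX hY h₁ rfl).trans (φ.A_eq_of_compatible hX hY h₂ rfl)
  have hmem : ρ u ∈ (φ qm).1.1 :=
    hqmμ ▸ hρ.mem_A_of_lt hX hY (q := qμ) rfl (mem_insert_of_mem t hu) huμ
  have hunion := φ.A_subset_union hX hY hq (q₂ := st) rfl (q₃ := qm) rfl union_singleton.symm
  rw [hρ.A_eq st t rfl] at hunion
  have hut : ρ u ≠ ρ t := fun h => hum ((hρ.leftInverse hX hσ).injective h ▸ htm)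
  exact (hunion hmem).resolve_right hut

lemma A_eq_image (hX : IsJPoset X) (hY : IsJPoset Y) (hρ : φ.Induces ρ)
    (hσ : StrIso.Induces φ.symm σ) (p : Str X) : (φ p).1.1 = ρ '' p.1.1 := by
  obtain ⟨a, ha, haB⟩ := p.exists_lt_B
  obtain ⟨m, hm⟩ := p.B_nonempty hX
  let q : Str X := ⟨(p.1.1, {m}),
    strMem_singleton p.A_subset p.A_finite (p.B_subset hm) ha (haB m hm)⟩
  rw [φ.A_eq_of_compatible hX hY (q' := q) ((Str.compatible_iff hX).2 ⟨m, hm, rfl⟩) rfl]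
  refine Subset.antisymm (fun y hy => ⟨σ y, ?_, hσ.leftInverse hY hρ y⟩)
    (image_subset_iff.2 fun u hu => hρ.mem_A hX hY hσ rfl hu)
  simpa using hσ.mem_A hY hX hρ (hρ.B_eq q m rfl) hy

end Induces

lemma exists_orderIso (hX : IsJPoset X) (hY : IsJPoset Y) :
    ∃ e : X ≃o Y, ∀ p : Str X, (φ p).1 = (e '' p.1.1, e '' p.1.2) := by
  obtain ⟨ρ, hρ⟩ := φ.exists_induces hX hY
  obtain ⟨σ, hσ⟩ := StrIso.exists_induces φ.symm hY hX
  let e : X ≃ Y := ⟨ρ, σ, hρ.leftInverse hX hσ, hσ.leftInverse hY hρ⟩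
  exact ⟨e.toOrderIso (hρ.monotone hX hY) (hσ.monotone hY hX),
    fun p => Prod.ext (hρ.A_eq_image hX hY hσ p) (hρ.B_eq_image hX hY p)⟩

end StrIso


/-- Main Theorem: `X ≅ Y` iff `Str X ≅ Str Y`; an isomorphism `ρ : X → Y`
induces the isomorphism `(A,B) ↦ (ρ(A), ρ(B))` of `Str X` onto `Str Y`, and every
isomorphism `φ : Str X → Str Y` is of this form for some isomorphism `ρ : X → Y`. -/
theorem stmt_17 {X Y : Type*} [PartialOrder X] [PartialOrder Y]
    (hX : IsJPoset X) (hY : IsJPoset Y) :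
    ((∃ ρ : X → Y, Function.Surjective ρ ∧ ∀ x x' : X, x ≤ x' ↔ ρ x ≤ ρ x') ↔
      (∃ φ : Str X → Str Y, Function.Surjective φ ∧
        ∀ p q : Str X, strLE p q ↔ strLE (φ p) (φ q))) ∧
    (∀ ρ : X → Y, Function.Surjective ρ → (∀ x x' : X, x ≤ x' ↔ ρ x ≤ ρ x') →
      ∃ φ : Str X → Str Y, Function.Surjective φ ∧
        (∀ p q : Str X, strLE p q ↔ strLE (φ p) (φ q)) ∧
        (∀ p : Str X, (φ p).1 = (ρ '' p.1.1, ρ '' p.1.2))) ∧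
    (∀ φ : Str X → Str Y, Function.Surjective φ →
      (∀ p q : Str X, strLE p q ↔ strLE (φ p) (φ q)) →
      ∃ ρ : X → Y, Function.Surjective ρ ∧ (∀ x x' : X, x ≤ x' ↔ ρ x ≤ ρ x') ∧
        (∀ p : Str X, (φ p).1 = (ρ '' p.1.1, ρ '' p.1.2))) := by
  have forward (ρ : X → Y) (hρ : Function.Surjective ρ) (hle : ∀ x x', x ≤ x' ↔ ρ x ≤ ρ x') :
      ∃ Φ : StrIso X Y, ∀ p, (Φ p).1 = (ρ '' p.1.1, ρ '' p.1.2) :=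
    ⟨StrIso.ofOrderIso
      (OrderIso.ofSurjective (OrderEmbedding.ofMapLEIff ρ fun x x' => (hle x x').symm) hρ),
      fun _ => rfl⟩
  have backward (φ : Str X → Str Y) (hφ : Function.Surjective φ)
      (hle : ∀ p q, strLE p q ↔ strLE (φ p) (φ q)) :
      ∃ e : X ≃o Y, ∀ p, (φ p).1 = (e '' p.1.1, e '' p.1.2) :=
    StrIso.exists_orderIso
      (RelIso.ofSurjective (RelEmbedding.ofMapRelIff φ fun p q => (hle p q).symm) hφ) hX hY
  refine ⟨⟨fun ⟨ρ, hρ, hle⟩ => ?_, fun ⟨φ, hφ, hle⟩ => ?_⟩, fun ρ hρ hle => ?_,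
    fun φ hφ hle => ?_⟩
  · obtain ⟨Φ, -⟩ := forward ρ hρ hle
    exact ⟨Φ, Φ.surjective, fun _ _ => Φ.map_rel_iff.symm⟩
  · obtain ⟨e, -⟩ := backward φ hφ hle
    exact ⟨e, e.surjective, fun _ _ => e.le_iff_le.symm⟩
  · obtain ⟨Φ, hΦ⟩ := forward ρ hρ hle
    exact ⟨Φ, Φ.surjective, fun _ _ => Φ.map_rel_iff.symm, hΦ⟩
  · obtain ⟨e, he⟩ := backward φ hφ hle
    exact ⟨e, e.surjective, fun _ _ => e.le_iff_le.symm, he⟩
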